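/- arXiv:1903.03750 — 4 statements merged into one kernel-verified Lean document; each statement's English description precedes it below -/
import Mathlib

section
/- Let k be a field of characteristic different from 2 in which 7 is not a sum of three squares, let k(X₁,…,Xₙ) be the rational function field in n variables over k (the fraction field of the polynomial ring k[X₁,…,Xₙ]), and let k′ be any intermediate field with k ⊆ k′ ⊆ k(X₁,…,Xₙ). Then 7 is not a sum of three squares in k′. -/
/-!
Seven is a sum of three squares in a field `K` exactly when the form `⟨1, 1, 1, -7⟩` is
isotropic over `K`. Anisotropy of a diagonal form with integer weights passes from a ring `R` to
`R[X]` (compare leading coefficients), hence to `k[X₁, …, Xₙ]`, then to its fraction field (clear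
denominators), and finally to every subring of it.
-/

open QuadraticMap

section

variable {ι : Type*} [Fintype ι] (w : ι → ℤ)

theorem QuadraticMap.map_weightedSumSquares_apply {R S F : Type*} [CommRing R] [CommRing S]
    [FunLike F R S] [RingHomClass F R S] (f : F) (v : ι → R) :
    f (weightedSumSquares R w v) = weightedSumSquares S w (f ∘ v) := by
  simp [weightedSumSquares_apply, map_sum]

theorem QuadraticMap.anisotropic_weightedSumSquares_of_injective {R S F : Type*} [CommRing R]
    [CommRing S] [FunLike F R S] [RingHomClass F R S] {f : F} (hf : Function.Injective f)
    (hS : (weightedSumSquares S w).Anisotropic) : (weightedSumSquares R w).Anisotropic := by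
  intro v hv
  have hfv := hS (f ∘ v) (by rw [← map_weightedSumSquares_apply, hv, map_zero])
  funext i
  exact hf (by simpa using congrFun hfv i)

theorem Polynomial.anisotropic_weightedSumSquares {R : Type*} [CommRing R]
    (hR : (weightedSumSquares R w).Anisotropic) :
    (weightedSumSquares (Polynomial R) w).Anisotropic := by
  classical
  intro v hv
  by_contra hv0
  obtain ⟨i₀, hi₀, hmax⟩ := Finset.exists_max_image (Finset.univ.filter (v · ≠ 0))
    (fun i => (v i).natDegree) (by simpa [Function.ne_iff, Finset.filter_nonempty_iff] using hv0)
  set m := (v i₀).natDegree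
  have hdeg : ∀ i, (v i).natDegree ≤ m := fun i => by
    by_cases hi : v i = 0
    · simp [hi]
    · exact hmax i (by simpa using hi)
  -- the coefficient of `X ^ (m + m)` in `Q v`, where `m` is the largest degree of an entry
  have hcoeff : weightedSumSquares R w (fun i => (v i).coeff m) = 0 := by
    simpa [weightedSumSquares_apply, Polynomial.finsetSum_coeff,
      Polynomial.coeff_mul_add_eq_of_natDegree_le (hdeg _) (hdeg _)] using
      congrArg (Polynomial.coeff · (m + m)) hv
  have hlead : (v i₀).leadingCoeff = 0 := congrFun (hR _ hcoeff) i₀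
  exact (Finset.mem_filter.1 hi₀).2 (Polynomial.leadingCoeff_eq_zero.1 hlead)

theorem MvPolynomial.anisotropic_weightedSumSquares {R : Type*} [CommRing R]
    (hR : (weightedSumSquares R w).Anisotropic) (n : ℕ) :
    (weightedSumSquares (MvPolynomial (Fin n) R) w).Anisotropic := by
  induction n with
  | zero =>
    exact anisotropic_weightedSumSquares_of_injective w
      (MvPolynomial.isEmptyRingEquiv R (Fin 0)).injective hR
  | succ n ih =>
    exact anisotropic_weightedSumSquares_of_injective w
      (MvPolynomial.finSuccEquiv R n).injective (Polynomial.anisotropic_weightedSumSquares w ih)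

theorem IsFractionRing.anisotropic_weightedSumSquares {R K : Type*} [CommRing R] [IsDomain R]
    [Field K] [Algebra R K] [IsFractionRing R K] (hR : (weightedSumSquares R w).Anisotropic) :
    (weightedSumSquares K w).Anisotropic := by
  intro v hv
  obtain ⟨b, hb⟩ := IsLocalization.exist_integer_multiples_of_finite (nonZeroDivisors R) v
  choose a ha using hb
  have hav : algebraMap R K ∘ a = algebraMap R K b • v := by
    funext i
    simpa [Algebra.smul_def] using ha i
  have ha0 : a = 0 := hR a <| IsFractionRing.injective R K <| by
    rw [map_weightedSumSquares_apply, hav, QuadraticMap.map_smul, hv, smul_zero, map_zero]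
  have hb0 : algebraMap R K b ≠ 0 := IsFractionRing.to_map_ne_zero_of_mem_nonZeroDivisors b.2
  funext i
  simpa [ha0, hb0] using (congrFun hav i).symm

end

/-- Otherwise `-1 = (y / x) ^ 2 + (z / x) ^ 2`, and `7 = 4 ^ 2 + 3 ^ 2 * (-1)`. -/
theorem eq_zero_of_sq_add_sq_add_sq_eq_zero {K : Type*} [Field K]
    (h7 : ¬ ∃ a b c : K, (7 : K) = a ^ 2 + b ^ 2 + c ^ 2) {x y z : K}
    (h : x ^ 2 + y ^ 2 + z ^ 2 = 0) : x = 0 := by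
  by_contra hx
  exact h7 ⟨4, 3 * y / x, 3 * z / x, by field_simp; linear_combination (-9 : K) * h⟩

theorem weightedSumSquares_seven_apply {R : Type*} [CommRing R] (v : Fin 4 → R) :
    weightedSumSquares R ![1, 1, 1, -7] v = v 0 ^ 2 + v 1 ^ 2 + v 2 ^ 2 - 7 * v 3 ^ 2 := by
  simp [weightedSumSquares_apply, Fin.sum_univ_four, pow_two, sub_eq_add_neg]

theorem anisotropic_weightedSumSquares_seven_iff (K : Type*) [Field K] :
    (weightedSumSquares K ![1, 1, 1, -7]).Anisotropic ↔
      ¬ ∃ x y z : K, (7 : K) = x ^ 2 + y ^ 2 + z ^ 2 := by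
  constructor
  · rintro hQ ⟨x, y, z, h⟩
    have := congrFun (hQ ![x, y, z, 1] (by
      rw [weightedSumSquares_seven_apply]; simp [h])) 3
    simp at this
  intro h7 v hv
  have hsum : v 0 ^ 2 + v 1 ^ 2 + v 2 ^ 2 = 7 * v 3 ^ 2 := by
    rw [weightedSumSquares_seven_apply] at hv
    linear_combination hv
  by_cases h3 : v 3 = 0
  · rw [h3] at hsum
    have h0 : v 0 = 0 :=
      eq_zero_of_sq_add_sq_add_sq_eq_zero h7 (y := v 1) (z := v 2) (by linear_combination hsum)
    have h1 : v 1 = 0 :=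
      eq_zero_of_sq_add_sq_add_sq_eq_zero h7 (y := v 0) (z := v 2) (by linear_combination hsum)
    have h2 : v 2 = 0 :=
      eq_zero_of_sq_add_sq_add_sq_eq_zero h7 (y := v 0) (z := v 1) (by linear_combination hsum)
    funext i
    fin_cases i <;> assumption
  · exact absurd ⟨v 0 / v 3, v 1 / v 3, v 2 / v 3, by field_simp; linear_combination -hsum⟩ h7

theorem not_sum_three_squares_subfield_of_rational_function_field_general
    (k : Type*) [Field k]
    (h7 : ¬ ∃ x y z : k, (7 : k) = x ^ 2 + y ^ 2 + z ^ 2)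
    (n : ℕ) (k' : IntermediateField k (FractionRing (MvPolynomial (Fin n) k))) :
    ¬ ∃ x y z : k', (7 : k') = x ^ 2 + y ^ 2 + z ^ 2 := by
  have hk := (anisotropic_weightedSumSquares_seven_iff k).2 h7
  have hL := IsFractionRing.anisotropic_weightedSumSquares
    (K := FractionRing (MvPolynomial (Fin n) k)) _
    (MvPolynomial.anisotropic_weightedSumSquares _ hk n)
  exact (anisotropic_weightedSumSquares_seven_iff k').1
    (anisotropic_weightedSumSquares_of_injective _ k'.val.injective hL)

/-- If `7` is not a sum of three squares in a field `k` of characteristic `≠ 2`, then `7` is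
not a sum of three squares in any intermediate field `k ⊆ k' ⊆ k(X₁, …, Xₙ)` of the rational
function field in `n` variables over `k`. -/
theorem not_sum_three_squares_subfield_of_rational_function_field
    (k : Type*) [Field k] (hchar : ringChar k ≠ 2)
    (h7 : ¬ ∃ x y z : k, (7 : k) = x ^ 2 + y ^ 2 + z ^ 2)
    (n : ℕ) (k' : IntermediateField k (FractionRing (MvPolynomial (Fin n) k))) :
    ¬ ∃ x y z : k', (7 : k') = x ^ 2 + y ^ 2 + z ^ 2 :=
  not_sum_three_squares_subfield_of_rational_function_field_general k h7 n k'
end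

section
/- Let k be a field and s a positive integer such that −1 is a sum of s squares in k. If d is a non-negative integer with 2^d ≤ s < 2^{d+1}, then −1 is a sum of 2^d squares in k. -/
/-!
Pfister: an element `α` of `k` is a sum of `2^d` squares exactly when it is the scalar of a
matrix similitude `Aᵀ * A = α • 1` of size `2^d`. Such matrices are built recursively from
`2^(d-1)`-blocks, and they are closed under products, so sums of `2^d` squares are closed under
multiplication and inversion. Now split `-1 = a + b` with `a` a sum of `2^d` squares and `b` a sum
of `s - 2^d < 2^d` squares. Either `a = 0`, or `-a = 1 + b` is a sum of `2^d` squares and so is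
`-1 = (-a) * a⁻¹`.
-/

open Matrix

def IsSumOfSquares {R : Type*} [CommSemiring R] (n : ℕ) (a : R) : Prop :=
  ∃ x : Fin n → R, a = ∑ i, x i ^ 2

namespace IsSumOfSquares

variable {R : Type*} [CommSemiring R] {m n : ℕ} {a b : R}

theorem zero (n : ℕ) : IsSumOfSquares n (0 : R) := ⟨0, by simp⟩

theorem sq (a : R) : IsSumOfSquares 1 (a ^ 2) := ⟨fun _ => a, by simp⟩

theorem add (ha : IsSumOfSquares m a) (hb : IsSumOfSquares n b) :
    IsSumOfSquares (m + n) (a + b) := by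
  obtain ⟨x, rfl⟩ := ha
  obtain ⟨y, rfl⟩ := hb
  exact ⟨Fin.append x y, by simp [Fin.sum_univ_add]⟩

theorem mono (hmn : m ≤ n) (ha : IsSumOfSquares m a) : IsSumOfSquares n a := by
  obtain ⟨j, rfl⟩ := Nat.exists_eq_add_of_le hmn
  simpa using ha.add (zero j)

theorem exists_eq_add (h : IsSumOfSquares (m + n) a) :
    ∃ b c, IsSumOfSquares m b ∧ IsSumOfSquares n c ∧ a = b + c := by
  obtain ⟨x, rfl⟩ := h
  exact ⟨_, _, ⟨_, rfl⟩, ⟨_, rfl⟩, Fin.sum_univ_add _⟩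

theorem of_transpose_mul_self [NeZero n] {A : Matrix (Fin n) (Fin n) R}
    (hA : Aᵀ * A = a • 1) : IsSumOfSquares n a :=
  ⟨fun i => A i 0, by simpa [mul_apply, _root_.sq] using (congrFun (congrFun hA 0) 0).symm⟩

end IsSumOfSquares

namespace Matrix

variable {k ι : Type*} [Field k] [Fintype ι] [DecidableEq ι] {A B : Matrix ι ι k} {β γ : k}

theorem mul_transpose_eq_smul_one (hβ : β ≠ 0) (hA : Aᵀ * A = β • 1) : A * Aᵀ = β • 1 := by
  have h : A * (β⁻¹ • Aᵀ) = 1 :=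
    mul_eq_one_comm.mp (by rw [smul_mul, hA, smul_smul, inv_mul_cancel₀ hβ, one_smul])
  calc A * Aᵀ = β • (A * (β⁻¹ • Aᵀ)) := by
        rw [Matrix.mul_smul, smul_smul, mul_inv_cancel₀ hβ, one_smul]
    _ = β • 1 := by rw [h]

theorem transpose_mul_self_fromBlocks_diag (hA : Aᵀ * A = β • 1) :
    (fromBlocks A 0 0 A)ᵀ * fromBlocks A 0 0 A = β • 1 := by
  simp [fromBlocks_transpose, fromBlocks_multiply, hA, ← fromBlocks_one, fromBlocks_smul]

/-- The lower-left block is forced by `Bᵀ * A + A * C = 0`, since `A⁻¹ = β⁻¹ • Aᵀ`. -/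
theorem transpose_mul_self_fromBlocks (hβ : β ≠ 0) (hA : Aᵀ * A = β • 1)
    (hB : Bᵀ * B = γ • 1) (hB' : B * Bᵀ = γ • 1) :
    (fromBlocks A B (-(β⁻¹ • (Aᵀ * Bᵀ * A))) Aᵀ)ᵀ * fromBlocks A B (-(β⁻¹ • (Aᵀ * Bᵀ * A))) Aᵀ
      = (β + γ) • 1 := by
  set C := -(β⁻¹ • (Aᵀ * Bᵀ * A))
  have hA' := mul_transpose_eq_smul_one hβ hA
  have hAC : A * C = -(Bᵀ * A) := by
    simp only [C, Matrix.mul_neg, Matrix.mul_smul, ← Matrix.mul_assoc, hA', smul_mul, one_mul,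
      smul_smul, inv_mul_cancel₀ hβ, one_smul]
  have hCA : Cᵀ * Aᵀ = -(Aᵀ * B) := by
    simp only [C, transpose_neg, transpose_smul, transpose_mul, transpose_transpose,
      Matrix.neg_mul, smul_mul, Matrix.mul_assoc, hA', Matrix.mul_smul, Matrix.mul_one, smul_smul,
      inv_mul_cancel₀ hβ, one_smul]
  have hCC : Cᵀ * C = γ • 1 :=
    calc Cᵀ * C = -(β⁻¹ • (Cᵀ * Aᵀ * Bᵀ * A)) := by
          simp only [C, Matrix.mul_neg, Matrix.mul_smul, Matrix.mul_assoc]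
      _ = β⁻¹ • (Aᵀ * (B * Bᵀ) * A) := by
          rw [hCA]; simp only [Matrix.neg_mul, neg_neg, smul_neg, Matrix.mul_assoc]
      _ = γ • 1 := by
          rw [hB', Matrix.mul_smul, Matrix.mul_one, smul_mul, hA, smul_smul, smul_smul,
            mul_right_comm, inv_mul_cancel₀ hβ, one_mul]
  rw [fromBlocks_transpose, fromBlocks_multiply, transpose_transpose, hA, hAC, hCA, hCC, hB, hA']
  simp [← add_smul, add_comm γ, ← fromBlocks_one, fromBlocks_smul]

theorem exists_fromBlocks_transpose_mul_self (hA : Aᵀ * A = β • 1) (hB : Bᵀ * B = γ • 1) :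
    ∃ M : Matrix (ι ⊕ ι) (ι ⊕ ι) k, Mᵀ * M = (β + γ) • 1 := by
  rcases eq_or_ne β 0 with rfl | hβ
  · exact ⟨_, zero_add γ ▸ transpose_mul_self_fromBlocks_diag hB⟩
  rcases eq_or_ne γ 0 with rfl | hγ
  · exact ⟨_, (add_zero β).symm ▸ transpose_mul_self_fromBlocks_diag hA⟩
  exact ⟨_, transpose_mul_self_fromBlocks hβ hA hB (mul_transpose_eq_smul_one hγ hB)⟩

end Matrix

namespace IsSumOfSquares

variable {k : Type*} [Field k] {d : ℕ} {a b : k}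

theorem exists_transpose_mul_self (h : IsSumOfSquares (2 ^ d) a) :
    ∃ A : Matrix (Fin (2 ^ d)) (Fin (2 ^ d)) k, Aᵀ * A = a • 1 := by
  induction d generalizing a with
  | zero =>
    obtain ⟨x, rfl⟩ := h
    refine ⟨of fun _ _ => x 0, ?_⟩
    ext i j
    fin_cases i; fin_cases j
    simp [mul_apply, _root_.sq]
  | succ d ih =>
    have hpow : 2 ^ (d + 1) = 2 ^ d + 2 ^ d := by rw [pow_succ, mul_two]
    obtain ⟨b, c, hb, hc, rfl⟩ := exists_eq_add (hpow ▸ h)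
    obtain ⟨A, hA⟩ := ih hb
    obtain ⟨B, hB⟩ := ih hc
    obtain ⟨M, hM⟩ := exists_fromBlocks_transpose_mul_self hA hB
    let e : Fin (2 ^ (d + 1)) ≃ Fin (2 ^ d) ⊕ Fin (2 ^ d) :=
      (finCongr hpow).trans finSumFinEquiv.symm
    refine ⟨M.submatrix e e, ?_⟩
    rw [transpose_submatrix, submatrix_mul_equiv, hM, ← submatrix_one_equiv e]
    rfl

theorem mul (ha : IsSumOfSquares (2 ^ d) a) (hb : IsSumOfSquares (2 ^ d) b) :
    IsSumOfSquares (2 ^ d) (a * b) := by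
  obtain ⟨A, hA⟩ := ha.exists_transpose_mul_self
  obtain ⟨B, hB⟩ := hb.exists_transpose_mul_self
  refine of_transpose_mul_self (A := A * B) ?_
  rw [transpose_mul, Matrix.mul_assoc, ← Matrix.mul_assoc Aᵀ, hA, smul_mul, Matrix.one_mul,
    Matrix.mul_smul, hB, smul_smul]

theorem inv (ha : IsSumOfSquares (2 ^ d) a) : IsSumOfSquares (2 ^ d) a⁻¹ := by
  have h := ha.mul ((sq a⁻¹).mono Nat.one_le_two_pow)
  have hinv : a * a⁻¹ ^ 2 = a⁻¹ := by
    simpa [mul_comm, _root_.sq] using mul_self_mul_inv a⁻¹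
  exact hinv ▸ h

end IsSumOfSquares

theorem neg_one_sum_two_pow_squares_general (k : Type*) [Field k] (s : ℕ)
    (h : ∃ x : Fin s → k, (-1 : k) = ∑ i, x i ^ 2)
    (d : ℕ) (hd1 : 2 ^ d ≤ s) (hd2 : s < 2 ^ (d + 1)) :
    ∃ x : Fin (2 ^ d) → k, (-1 : k) = ∑ i, x i ^ 2 := by
  obtain ⟨t, rfl⟩ := Nat.exists_eq_add_of_le hd1
  have ht : t < 2 ^ d := by rw [pow_succ] at hd2; omega
  obtain ⟨a, b, ha, hb, hab⟩ := IsSumOfSquares.exists_eq_add h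
  rcases eq_or_ne a 0 with rfl | ha0
  · rw [hab, zero_add]
    exact hb.mono ht.le
  have hna : IsSumOfSquares (2 ^ d) (-a) := by
    rw [show -a = 1 ^ 2 + b by linear_combination hab]
    exact ((IsSumOfSquares.sq 1).add hb).mono (by omega)
  rw [show (-1 : k) = -a * a⁻¹ by rw [neg_mul, mul_inv_cancel₀ ha0]]
  exact hna.mul ha.inv

/-- **Pfister.** If `-1` is a sum of `s` squares in a field `k` and `2^d ≤ s < 2^(d+1)`,
then `-1` is a sum of `2^d` squares in `k`. -/
theorem neg_one_sum_two_pow_squares (k : Type*) [Field k] (s : ℕ) (hs : 0 < s)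
    (h : ∃ x : Fin s → k, (-1 : k) = ∑ i, x i ^ 2)
    (d : ℕ) (hd1 : 2 ^ d ≤ s) (hd2 : s < 2 ^ (d + 1)) :
    ∃ x : Fin (2 ^ d) → k, (-1 : k) = ∑ i, x i ^ 2 :=
  neg_one_sum_two_pow_squares_general k s h d hd1 hd2
end

section
/- Let d be a square-free integer with d ≡ 1 (mod 8) and d ≠ 1, and let k = ℚ(√d) be the real quadratic field obtained by adjoining √d to ℚ inside ℝ. Then 7 is not a sum of three squares in k. -/
/-!
Write the elements of `ℚ(√d)` as `a + b√d`. If `7 = ∑ (aᵢ + bᵢ√d)²` with `√d` irrational, comparing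
rational and irrational parts gives rational vectors with `|a|² + d|b|² = 7` and `a · b = 0`, and
after clearing denominators integer vectors with `|A|² + d|B|² = 7N²` and `A · B = 0`. As
`d ≡ 1 (mod 8)`, `d` is a square `s²` modulo every power of `2`, so
`|A + sB|² = |A|² + 2s A·B + s²|B|² ≡ 7N² (mod 2^(2v+3))` where `2^v ∥ N`. This is impossible,
since three squares never sum to `4^v (8m + 7)`, not even modulo `2^(2v+3)`.
If `√d` is rational, `ℚ(√d) = ℚ` and this is the case `b = 0`.
-/

open Finset IntermediateField

namespace Int

lemma exists_sq_sub_dvd_two_pow {d : ℤ} (hd : d % 8 = 1) (n : ℕ) :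
    ∃ s : ℤ, 2 ^ n ∣ s ^ 2 - d := by
  suffices h : ∀ m : ℕ, ∃ s : ℤ, 2 ^ (m + 3) ∣ s ^ 2 - d by
    obtain ⟨s, hs⟩ := h n
    exact ⟨s, (pow_dvd_pow 2 (by omega)).trans hs⟩
  intro m
  induction m with
  | zero => exact ⟨1, by norm_num; omega⟩
  | succ m ih =>
    obtain ⟨s, t, ht⟩ := ih
    obtain ⟨u, rfl⟩ : Odd s := by
      have hsq : s ^ 2 = d + 2 * (2 ^ (m + 2) * t) := by linear_combination ht
      refine (Int.odd_pow' two_ne_zero).mp ?_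
      rw [hsq]
      exact (Int.odd_iff.mpr (by omega)).add_even (even_two_mul _)
    -- Newton step: `(s + 2 ^ (m + 2) t)² - d ≡ 2 ^ (m + 3) t (1 + s) ≡ 0 (mod 2 ^ (m + 4))`
    exact ⟨2 * u + 1 + 2 ^ (m + 2) * t, t * (u + 1) + 2 ^ m * t ^ 2, by linear_combination ht⟩

lemma even_of_four_dvd_sum_three_sq {x y z : ℤ} (h : 4 ∣ x ^ 2 + y ^ 2 + z ^ 2) :
    Even x ∧ Even y ∧ Even z := by
  have hmod : ∀ a b c : ZMod 4,
      a ^ 2 + b ^ 2 + c ^ 2 = 0 → a ^ 2 = 0 ∧ b ^ 2 = 0 ∧ c ^ 2 = 0 := by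
    decide
  have heven (w : ℤ) (hw : (w : ZMod 4) ^ 2 = 0) : Even w := by
    have h4 : (4 : ℤ) ∣ w ^ 2 :=
      (ZMod.intCast_zmod_eq_zero_iff_dvd _ 4).1 (by push_cast; exact hw)
    exact even_iff_two_dvd.2 <|
      Int.prime_two.dvd_of_dvd_pow ((by norm_num : (2 : ℤ) ∣ 4).trans h4)
  obtain ⟨hx, hy, hz⟩ := hmod _ _ _ <| by
    simpa using (ZMod.intCast_zmod_eq_zero_iff_dvd _ 4).2 h
  exact ⟨heven x hx, heven y hy, heven z hz⟩

lemma not_eight_dvd_sum_three_sq_sub_seven_mul_sq {x y z M : ℤ} (hM : Odd M) :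
    ¬ 8 ∣ x ^ 2 + y ^ 2 + z ^ 2 - 7 * M ^ 2 := by
  have hsq : ∀ m : ZMod 8, (2 * m + 1) ^ 2 = 1 := by decide
  have hsum : ∀ a b c : ZMod 8, a ^ 2 + b ^ 2 + c ^ 2 ≠ 7 := by decide
  obtain ⟨m, rfl⟩ := hM
  intro h
  have h8 := (ZMod.intCast_zmod_eq_zero_iff_dvd _ 8).2 h
  push_cast at h8
  rw [hsq, mul_one, sub_eq_zero] at h8
  exact hsum _ _ _ h8

lemma not_two_pow_dvd_sum_three_sq_sub_seven_mul_sq (v : ℕ) {M : ℤ} (hM : Odd M) (x y z : ℤ) :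
    ¬ 2 ^ (2 * v + 3) ∣ x ^ 2 + y ^ 2 + z ^ 2 - 7 * (2 ^ v * M) ^ 2 := by
  induction v generalizing x y z with
  | zero => simpa using not_eight_dvd_sum_three_sq_sub_seven_mul_sq hM
  | succ v ih =>
    intro h
    have h4 : 4 ∣ x ^ 2 + y ^ 2 + z ^ 2 := by
      have h4M : (4 : ℤ) ∣ 7 * (2 ^ (v + 1) * M) ^ 2 := ⟨7 * (2 ^ v * M) ^ 2, by ring⟩
      exact (dvd_sub_left h4M).mp ((Dvd.intro (2 ^ (2 * v + 3)) (by ring)).trans h)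
    obtain ⟨⟨a, rfl⟩, ⟨b, rfl⟩, ⟨c, rfl⟩⟩ := even_of_four_dvd_sum_three_sq h4
    refine ih a b c ((mul_dvd_mul_iff_left (four_ne_zero (α := ℤ))).mp ?_)
    rwa [show (2 : ℤ) ^ (2 * (v + 1) + 3) = 4 * 2 ^ (2 * v + 3) by ring,
      show (a + a) ^ 2 + (b + b) ^ 2 + (c + c) ^ 2 - 7 * (2 ^ (v + 1) * M) ^ 2
        = 4 * (a ^ 2 + b ^ 2 + c ^ 2 - 7 * (2 ^ v * M) ^ 2) by ring] at h

lemma sum_sq_add_mul_sum_sq_ne_seven_mul_sq {d : ℤ} (hd : d % 8 = 1) {A B : Fin 3 → ℤ}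
    (horth : ∑ i, A i * B i = 0) {N : ℤ} (hN : N ≠ 0) :
    ∑ i, A i ^ 2 + d * ∑ i, B i ^ 2 ≠ 7 * N ^ 2 := by
  intro h
  obtain ⟨v, M, hM, hNM⟩ := Nat.exists_eq_two_pow_mul_odd (Int.natAbs_ne_zero.2 hN)
  have hN2 : N ^ 2 = (2 ^ v * M) ^ 2 := by rw [← Int.natAbs_sq, hNM]; push_cast; ring
  obtain ⟨s, hs⟩ := exists_sq_sub_dvd_two_pow hd (2 * v + 3)
  refine not_two_pow_dvd_sum_three_sq_sub_seven_mul_sq v ((Int.odd_coe_nat M).2 hM)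
    (A 0 + s * B 0) (A 1 + s * B 1) (A 2 + s * B 2) ?_
  have hdiff : (A 0 + s * B 0) ^ 2 + (A 1 + s * B 1) ^ 2 + (A 2 + s * B 2) ^ 2
      - 7 * (2 ^ v * (M : ℤ)) ^ 2 = (s ^ 2 - d) * ∑ i, B i ^ 2 := by
    simp only [Fin.sum_univ_three] at h horth ⊢
    linear_combination 2 * s * horth + h + 7 * hN2
  exact hdiff ▸ hs.mul_right _

end Int

lemma Rat.sum_sq_add_mul_sum_sq_ne_seven {d : ℤ} (hd : d % 8 = 1) {a b : Fin 3 → ℚ}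
    (horth : ∑ i, a i * b i = 0) : ∑ i, a i ^ 2 + d * ∑ i, b i ^ 2 ≠ 7 := by
  intro h
  obtain ⟨⟨N, hN⟩, hint⟩ :=
    IsLocalization.exist_integer_multiples_of_finite (nonZeroDivisors ℤ) (Sum.elim a b)
  choose A hA using fun i => hint (Sum.inl i)
  choose B hB using fun i => hint (Sum.inr i)
  simp only [Sum.elim_inl, Sum.elim_inr, algebraMap_int_eq, eq_intCast, zsmul_eq_mul] at hA hB
  refine Int.sum_sq_add_mul_sum_sq_ne_seven_mul_sq hd (A := A) (B := B) ?_
    (nonZeroDivisors.ne_zero hN) ?_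
  · have hAB : ∑ i, (A i : ℚ) * B i = N ^ 2 * ∑ i, a i * b i := by
      simp only [hA, hB, mul_sum]; exact sum_congr rfl fun i _ => by ring
    exact_mod_cast (hAB.trans (by rw [horth, mul_zero]) : ∑ i, (A i : ℚ) * B i = 0)
  · have hnorm : ∑ i, (A i : ℚ) ^ 2 + d * ∑ i, (B i : ℚ) ^ 2
        = N ^ 2 * (∑ i, a i ^ 2 + d * ∑ i, b i ^ 2) := by
      simp only [hA, hB, mul_pow, ← mul_sum]; ring
    exact_mod_cast (hnorm.trans (by rw [h, mul_comm]) :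
      ∑ i, (A i : ℚ) ^ 2 + d * ∑ i, (B i : ℚ) ^ 2 = 7 * N ^ 2)

lemma Rat.sum_sq_ne_seven (a : Fin 3 → ℚ) : ∑ i, a i ^ 2 ≠ 7 := by
  simpa using sum_sq_add_mul_sum_sq_ne_seven (d := 1) rfl (a := a) (b := 0) (by simp)

lemma IntermediateField.exists_eq_add_mul_of_mem_adjoin_of_sq_eq {F E : Type*}
    [Field F] [Field E] [Algebra F E] {r : E} {c : F} (hr : r ^ 2 = algebraMap F E c) {x : E}
    (hx : x ∈ F⟮r⟯) :
    ∃ a b : F, x = algebraMap F E a + algebraMap F E b * r := by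
  have hint : IsIntegral F r := .of_pow two_pos (hr ▸ isIntegral_algebraMap)
  rw [← SetLike.mem_coe, ← coe_toSubalgebra,
    adjoin_simple_toSubalgebra_of_isAlgebraic hint.isAlgebraic, SetLike.mem_coe] at hx
  induction hx using Algebra.adjoin_induction with
  | mem y hy => exact ⟨0, 1, by simp [Set.mem_singleton_iff.1 hy]⟩
  | algebraMap a => exact ⟨a, 0, by simp⟩
  | add y z _ _ hy hz =>
    obtain ⟨a, b, rfl⟩ := hy
    obtain ⟨a', b', rfl⟩ := hz
    exact ⟨a + a', b + b', by simp only [map_add]; ring⟩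
  | mul y z _ _ hy hz =>
    obtain ⟨a, b, rfl⟩ := hy
    obtain ⟨a', b', rfl⟩ := hz
    refine ⟨a * a' + c * (b * b'), a * b' + b * a', ?_⟩
    simp only [map_add, map_mul]
    linear_combination algebraMap F E b * algebraMap F E b' * hr

lemma Irrational.sum_add_mul_sq_ne_seven {r : ℝ} (hr : Irrational r) {d : ℤ} (hd : d % 8 = 1)
    (hsq : r ^ 2 = d) (a b : Fin 3 → ℚ) : ∑ i, ((a i : ℝ) + b i * r) ^ 2 ≠ 7 := by
  intro h
  have hexp : ∑ i, ((a i : ℝ) + b i * r) ^ 2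
      = ((∑ i, a i ^ 2 + d * ∑ i, b i ^ 2 : ℚ) : ℝ) + ((2 * ∑ i, a i * b i : ℚ) : ℝ) * r := by
    push_cast
    simp only [Fin.sum_univ_three]
    linear_combination ((b 0 : ℝ) ^ 2 + (b 1 : ℝ) ^ 2 + (b 2 : ℝ) ^ 2) * hsq
  have horth : ∑ i, a i * b i = 0 := by
    by_contra hne
    exact ((hr.ratCast_mul (mul_ne_zero two_ne_zero hne)).ratCast_add _).ne_ofNat 7 (hexp ▸ h)
  refine Rat.sum_sq_add_mul_sum_sq_ne_seven hd horth ?_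
  rw [horth, mul_zero, Rat.cast_zero, zero_mul, add_zero] at hexp
  exact_mod_cast hexp ▸ h

theorem not_sum_three_squares_real_quadratic_general
    (d : ℤ) (hd : d % 8 = 1)
    (k : IntermediateField ℚ ℝ) (hk : k = IntermediateField.adjoin ℚ {Real.sqrt d}) :
    ¬ ∃ x y z : k, (7 : k) = x ^ 2 + y ^ 2 + z ^ 2 := by
  subst hk
  rintro ⟨x, y, z, h⟩
  set v : Fin 3 → ℝ := ![x, y, z]
  have hv : ∀ i, v i ∈ ℚ⟮√(d : ℝ)⟯ := by
    intro i; fin_cases i <;> simp [v]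
  have h7 : ∑ i, v i ^ 2 = 7 := by
    have h7 := congrArg ℚ⟮√(d : ℝ)⟯.val h.symm
    simp only [map_add, map_pow, map_ofNat, coe_val] at h7
    simpa [v, Fin.sum_univ_three] using h7
  by_cases hirr : Irrational √(d : ℝ)
  · have hsq : √(d : ℝ) ^ 2 = d :=
      Real.sq_sqrt (not_lt.1 fun hneg => hirr.ne_zero (Real.sqrt_eq_zero'.2 hneg.le))
    choose a b hab using fun i =>
      exists_eq_add_mul_of_mem_adjoin_of_sq_eq (c := (d : ℚ)) (by rw [hsq]; simp) (hv i)
    refine hirr.sum_add_mul_sq_ne_seven hd hsq a b ?_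
    simpa [hab] using h7
  · obtain ⟨q, hq⟩ := not_not.1 hirr
    have hbot : ℚ⟮√(d : ℝ)⟯ = ⊥ := adjoin_simple_eq_bot_iff.2 (mem_bot.2 ⟨q, by simpa using hq⟩)
    choose a ha using fun i => mem_bot.1 (hbot ▸ hv i)
    refine Rat.sum_sq_ne_seven a ?_
    simp only [← ha, eq_ratCast] at h7
    exact_mod_cast h7

/-- If `d ≡ 1 (mod 8)` is a square-free integer, `d ≠ 1`, then `7` is not a sum of
three squares in the real quadratic field `k = ℚ(√d)`. -/
theorem not_sum_three_squares_real_quadratic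
    (d : ℤ) (hsf : Squarefree d) (hd : d % 8 = 1) (hd1 : d ≠ 1)
    (k : IntermediateField ℚ ℝ) (hk : k = IntermediateField.adjoin ℚ {Real.sqrt d}) :
    ¬ ∃ x y z : k, (7 : k) = x ^ 2 + y ^ 2 + z ^ 2 :=
  not_sum_three_squares_real_quadratic_general d hd k hk
end

section
/- The quadratic form ⟨1,1,1,−7⟩ is anisotropic over the field ℚ₂ of 2-adic numbers: if x, y, z, w ∈ ℚ₂ satisfy x² + y² + z² = 7w², then x = y = z = w = 0. -/
/-!
Squares in `ℤ/8` are `0`, `1` or `4`, and checking the finitely many cases shows that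
`a² + b² + c² ≡ 7d² (mod 8)` forces `a, b, c, d` to be even. Hence every solution in `ℤ₂` is
divisible by `2`, and halving it gives another solution; so each coordinate is divisible by every
power of `2` and vanishes. A solution in `ℚ₂ = Frac ℤ₂` becomes one in `ℤ₂` after clearing
denominators.
-/

set_option synthInstance.maxSize 1000 in
theorem ZMod.not_isUnit_of_sq_add_sq_add_sq_eq_seven_mul_sq :
    ∀ a b c d : ZMod 8, a ^ 2 + b ^ 2 + c ^ 2 = 7 * d ^ 2 →
      ¬IsUnit a ∧ ¬IsUnit b ∧ ¬IsUnit c ∧ ¬IsUnit d := by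
  decide

namespace PadicInt

variable {p : ℕ} [Fact p.Prime]

theorem p_dvd_of_not_isUnit_toZModPow {x : ℤ_[p]} {n : ℕ} (hx : ¬IsUnit (toZModPow n x)) :
    (p : ℤ_[p]) ∣ x :=
  (norm_lt_one_iff_dvd x).1 <| mem_nonunits.1 fun hu => hx (hu.map _)

theorem eq_zero_of_forall_pow_dvd {x : ℤ_[p]} (hx : ∀ n : ℕ, (p : ℤ_[p]) ^ n ∣ x) : x = 0 := by
  by_contra hne
  exact FiniteMultiplicity.not_iff_forall.2 hx (FiniteMultiplicity.of_prime_left prime_p hne)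

theorem two_dvd_of_sq_add_sq_add_sq_eq_seven_mul_sq {a b c d : ℤ_[2]}
    (h : a ^ 2 + b ^ 2 + c ^ 2 = 7 * d ^ 2) : 2 ∣ a ∧ 2 ∣ b ∧ 2 ∣ c ∧ 2 ∣ d := by
  have h8 := congrArg (toZModPow 3) h
  simp only [map_add, map_mul, map_pow, map_ofNat] at h8
  obtain ⟨ha, hb, hc, hd⟩ := ZMod.not_isUnit_of_sq_add_sq_add_sq_eq_seven_mul_sq _ _ _ _ h8
  exact mod_cast ⟨p_dvd_of_not_isUnit_toZModPow ha, p_dvd_of_not_isUnit_toZModPow hb,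
    p_dvd_of_not_isUnit_toZModPow hc, p_dvd_of_not_isUnit_toZModPow hd⟩

theorem pow_two_dvd_of_sq_add_sq_add_sq_eq_seven_mul_sq (n : ℕ) {a b c d : ℤ_[2]}
    (h : a ^ 2 + b ^ 2 + c ^ 2 = 7 * d ^ 2) :
    2 ^ n ∣ a ∧ 2 ^ n ∣ b ∧ 2 ^ n ∣ c ∧ 2 ^ n ∣ d := by
  induction n generalizing a b c d with
  | zero => simp
  | succ n ih =>
    obtain ⟨⟨a, rfl⟩, ⟨b, rfl⟩, ⟨c, rfl⟩, ⟨d, rfl⟩⟩ :=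
      two_dvd_of_sq_add_sq_add_sq_eq_seven_mul_sq h
    have halved : a ^ 2 + b ^ 2 + c ^ 2 = 7 * d ^ 2 :=
      mul_left_cancel₀ (by norm_num : (4 : ℤ_[2]) ≠ 0) (by linear_combination h)
    obtain ⟨ha, hb, hc, hd⟩ := ih halved
    simp only [pow_succ']
    exact ⟨mul_dvd_mul_left 2 ha, mul_dvd_mul_left 2 hb, mul_dvd_mul_left 2 hc,
      mul_dvd_mul_left 2 hd⟩

theorem eq_zero_of_sq_add_sq_add_sq_eq_seven_mul_sq {a b c d : ℤ_[2]}
    (h : a ^ 2 + b ^ 2 + c ^ 2 = 7 * d ^ 2) : a = 0 ∧ b = 0 ∧ c = 0 ∧ d = 0 := by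
  have hdvd n := pow_two_dvd_of_sq_add_sq_add_sq_eq_seven_mul_sq n h
  refine ⟨?_, ?_, ?_, ?_⟩ <;> refine eq_zero_of_forall_pow_dvd fun n => ?_ <;> push_cast
  exacts [(hdvd n).1, (hdvd n).2.1, (hdvd n).2.2.1, (hdvd n).2.2.2]

end PadicInt

theorem IsFractionRing.eq_zero_of_sq_add_sq_add_sq_eq_seven_mul_sq {R K : Type*} [CommRing R]
    [Field K] [Algebra R K] [IsFractionRing R K]
    (hR : ∀ a b c d : R, a ^ 2 + b ^ 2 + c ^ 2 = 7 * d ^ 2 → a = 0 ∧ b = 0 ∧ c = 0 ∧ d = 0)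
    {x y z w : K} (h : x ^ 2 + y ^ 2 + z ^ 2 = 7 * w ^ 2) :
    x = 0 ∧ y = 0 ∧ z = 0 ∧ w = 0 := by
  obtain ⟨⟨s, hs⟩, hint⟩ :=
    IsLocalization.exist_integer_multiples_of_finite (nonZeroDivisors R) ![x, y, z, w]
  obtain ⟨a, ha⟩ := hint 0
  obtain ⟨b, hb⟩ := hint 1
  obtain ⟨c, hc⟩ := hint 2
  obtain ⟨d, hd⟩ := hint 3
  simp only [Matrix.cons_val, Algebra.smul_def] at ha hb hc hd
  have hs0 : algebraMap R K s ≠ 0 := (IsLocalization.map_units K ⟨s, hs⟩).ne_zero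
  have hcleared : a ^ 2 + b ^ 2 + c ^ 2 = 7 * d ^ 2 := IsFractionRing.injective R K <| by
    simp only [map_add, map_mul, map_pow, map_ofNat, ha, hb, hc, hd]
    linear_combination algebraMap R K s ^ 2 * h
  obtain ⟨rfl, rfl, rfl, rfl⟩ := hR a b c d hcleared
  simp only [map_zero, zero_eq_mul, hs0, false_or] at ha hb hc hd
  exact ⟨ha, hb, hc, hd⟩

/-- The quadratic form `⟨1,1,1,-7⟩` is anisotropic over the `2`-adic numbers `ℚ₂`. -/
theorem anisotropic_padic_two (x y z w : ℚ_[2])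
    (h : x ^ 2 + y ^ 2 + z ^ 2 = 7 * w ^ 2) : x = 0 ∧ y = 0 ∧ z = 0 ∧ w = 0 :=
  IsFractionRing.eq_zero_of_sq_add_sq_add_sq_eq_seven_mul_sq
    (fun _ _ _ _ => PadicInt.eq_zero_of_sq_add_sq_add_sq_eq_seven_mul_sq) h
end
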